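/- Suppose F = (f_1,...,f_n)ᵗ is a vector-valued modular form of weight k for ρ and υ whose components are linearly independent over C. Then the set {F, D_k F, ..., D_k^{n-1} F} is linearly independent over the ring M of integral-weight modular forms for SL(2,Z), so these vectors generate a free M-submodule of rank n. -/

import Mathlib

set_option autoImplicit false

open Matrix MatrixGroups Complex

/-- The automorphy factor `J(γ,z) = c z + d` for `γ = [[a,b],[c,d]] ∈ SL(2,ℤ)`, `z ∈ ℍ`. -/
noncomputable def J (γ : SL(2,ℤ)) (z : UpperHalfPlane) : ℂ :=
  ((γ : Matrix (Fin 2) (Fin 2) ℤ) 1 0 : ℂ) * z + ((γ : Matrix (Fin 2) (Fin 2) ℤ) 1 1 : ℂ)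

/-- The Dedekind eta function `η(z) = q^{1/24} ∏_{n ≥ 1} (1 - q^n)`, `q = e^{2πiz}`,
regarded as a function of a complex variable (of interest for `Im z > 0`). -/
noncomputable def DedekindEta (z : ℂ) : ℂ :=
  Complex.exp (Real.pi * Complex.I * z / 12) *
    ∏' n : ℕ, (1 - Complex.exp (2 * Real.pi * Complex.I * ((n : ℂ) + 1) * z))

/-- The function `P(z) = (i/π) η'(z)/η(z)`. -/
noncomputable def Pfun (z : ℂ) : ℂ :=
  Complex.I / Real.pi * (deriv DedekindEta z / DedekindEta z)

/-- `υ : SL(2,ℤ) → ℂ` is a multiplier system of weight `k`: it takes values in the unit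
circle and `ν(γ,z) = υ(γ)(cz+d)^k` is a 1-cocycle (powers via the principal branch). -/
def IsMultiplierSystem (k : ℝ) (υ : SL(2,ℤ) → ℂ) : Prop :=
  (∀ γ, ‖υ γ‖ = 1) ∧
  ∀ γ σ : SL(2,ℤ), ∀ z : UpperHalfPlane,
    υ (γ * σ) * J (γ * σ) z ^ (k : ℂ) =
      υ γ * J γ (σ • z) ^ (k : ℂ) * (υ σ * J σ z ^ (k : ℂ))

/-- Holomorphy on the upper half-plane for a function of a complex variable. -/
def IsHolomorphicOnH (f : ℂ → ℂ) : Prop :=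
  ∀ z : ℂ, 0 < z.im → DifferentiableAt ℂ f z

/-- Moderate growth: `|f(x+iy)| ≤ y^N` for all `y > c`, for some positive `N`, `c`. -/
def IsModerateGrowth (f : ℂ → ℂ) : Prop :=
  ∃ (N : ℕ) (c : ℝ), 0 < N ∧ 0 < c ∧ ∀ z : ℂ, c < z.im → ‖f z‖ ≤ z.im ^ N

/-- A modular form of real weight `k` for the multiplier system `υ`: holomorphic on `ℍ`,
of moderate growth, and satisfying `f(γz) = υ(γ)(cz+d)^k f(z)`. -/
def IsModularFormMS (k : ℝ) (υ : SL(2,ℤ) → ℂ) (f : ℂ → ℂ) : Prop :=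
  IsHolomorphicOnH f ∧ IsModerateGrowth f ∧
    ∀ γ : SL(2,ℤ), ∀ z : UpperHalfPlane,
      f ((γ • z : UpperHalfPlane) : ℂ) = υ γ * J γ z ^ (k : ℂ) * f (z : ℂ)

/-- The modular derivative in weight `k`: `D_k f = (1/(2πi)) f' + k P f`. -/
noncomputable def Dk (k : ℝ) (f : ℂ → ℂ) : ℂ → ℂ :=
  fun z => 1 / (2 * Real.pi * Complex.I) * deriv f z + (k : ℂ) * Pfun z * f z

/-- A vector-valued modular form of weight `k` for the representation `ρ` and the
multiplier system `υ`: a vector of holomorphic, moderate-growth functions on `ℍ`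
satisfying `F(γz) = υ(γ)(cz+d)^k ρ(γ) F(z)`. -/
def IsVVModularForm {d : ℕ} (k : ℝ) (ρ : SL(2,ℤ) →* GL (Fin d) ℂ)
    (υ : SL(2,ℤ) → ℂ) (F : ℂ → Fin d → ℂ) : Prop :=
  (∀ i, IsHolomorphicOnH (fun z => F z i)) ∧
  (∀ i, IsModerateGrowth (fun z => F z i)) ∧
  ∀ γ : SL(2,ℤ), ∀ z : UpperHalfPlane,
    F ((γ • z : UpperHalfPlane) : ℂ) =
      fun i => υ γ * J γ z ^ (k : ℂ) *
        ((ρ γ).val.mulVec (F (z : ℂ))) i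

/-- Iterated modular derivative `D_k^n = D_{k+2(n-1)} ∘ ⋯ ∘ D_{k+2} ∘ D_k`. -/
noncomputable def DkIter (k : ℝ) : ℕ → (ℂ → ℂ) → ℂ → ℂ
  | 0 => fun f => f
  | n + 1 => fun f => Dk (k + 2 * n) (DkIter k n f)

/-- The modular Wronskian `W(F) = det (F, D_k F, …, D_k^{d-1} F)`. -/
noncomputable def ModularWronskian {d : ℕ} (k : ℝ) (F : ℂ → Fin d → ℂ) : ℂ → ℂ :=
  fun z => (Matrix.of fun i j : Fin d => DkIter k j (fun w => F w i) z).det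

/-- `ρ` is `T`-unitarizable: `ρ(T)` is conjugate to a unitary matrix. -/
def TUnitarizable {d : ℕ} (ρ : SL(2,ℤ) →* GL (Fin d) ℂ) : Prop :=
  ∃ u ∈ Matrix.unitaryGroup (Fin d) ℂ, ∃ P : GL (Fin d) ℂ,
    (ρ ModularGroup.T).val = P.val * u * (P⁻¹).val

/-- Irreducibility: the only invariant subspaces of `ℂ^d` are `0` and `ℂ^d`. -/
def RepIrreducible {d : ℕ} (ρ : SL(2,ℤ) →* GL (Fin d) ℂ) : Prop :=
  ∀ U : Submodule ℂ (Fin d → ℂ),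
    (∀ γ : SL(2,ℤ), ∀ v ∈ U, (ρ γ).val.mulVec v ∈ U) → U = ⊥ ∨ U = ⊤


/-!
Let `m` be the largest index with `g_m ≢ 0` and pick `z₀ ∈ ℍ` with `g_m(z₀) ≠ 0`.
Since `η` is holomorphic and nonvanishing on `ℍ`, so is `P`, and
`D_k^j = (2πi)^{-j} d^j/dz^j + (an operator of order < j with holomorphic coefficients)`.
Near `z₀` the relation `∑_{j ≤ m} g_j D_k^j F = 0` is therefore a linear ODE of order `m`
with invertible leading coefficient, solved by every combination `h = ∑ c_i f_i`.
As `m < n`, some `c ≠ 0` makes the `m`-jet of `h` at `z₀` vanish; differentiating the ODE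
then kills every derivative of `h` at `z₀`, so `h = 0` on `ℍ` by the identity theorem,
contradicting the independence of the `f_i`.
-/

open Set Finset Filter

theorem AnalyticOnNhd.iteratedDeriv {𝕜 F : Type*} [NontriviallyNormedField 𝕜]
    [NormedAddCommGroup F] [NormedSpace 𝕜 F] [CompleteSpace F] {f : 𝕜 → F} {s : Set 𝕜}
    (hf : AnalyticOnNhd 𝕜 f s) (n : ℕ) : AnalyticOnNhd 𝕜 (iteratedDeriv n f) s := by
  simpa only [iteratedDeriv_eq_iterate] using hf.iterated_deriv n

theorem eqOn_zero_of_iteratedDeriv_eq_zero {U : Set ℂ} {f : ℂ → ℂ} {z₀ : ℂ}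
    (hf : AnalyticOnNhd ℂ f U) (hU : IsOpen U) (hUc : IsPreconnected U) (hz₀ : z₀ ∈ U)
    (h : ∀ s, iteratedDeriv s f z₀ = 0) : EqOn f 0 U := by
  obtain ⟨r, hr, hball⟩ := Metric.isOpen_iff.mp hU z₀ hz₀
  have hzero : ∀ z ∈ Metric.ball z₀ r, f z = 0 := fun z hz => by
    rw [← Complex.taylorSeries_eq_on_ball ((hf.differentiableOn).mono hball) hz]
    simp [h]
  exact hf.eqOn_zero_of_preconnected_of_eventuallyEq_zero hUc hz₀
    (eventually_of_mem (Metric.ball_mem_nhds z₀ hr) hzero)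

theorem iteratedDeriv_sum_const_mul {ι : Type*} [Fintype ι] {f : ι → ℂ → ℂ} {z : ℂ}
    (c : ι → ℂ) {l : ℕ} (hf : ∀ i, ContDiffAt ℂ l (f i) z) :
    iteratedDeriv l (fun w => ∑ i, c i * f i w) z = ∑ i, c i * iteratedDeriv l (f i) z := by
  rw [iteratedDeriv_fun_sum (f := fun i w => c i * f i w) fun i _ =>
    contDiffAt_const.mul (hf i)]
  simp only [iteratedDeriv_const_mul_field]

theorem exists_ne_zero_sum_mul_eq_zero {K : Type*} [Field K] {n m : ℕ} (hmn : m < n)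
    (v : Fin n → Fin m → K) : ∃ c : Fin n → K, c ≠ 0 ∧ ∀ l, ∑ i, c i * v i l = 0 := by
  have hdep : ¬ LinearIndependent K v := fun hli => by
    have := hli.fintype_card_le_finrank
    simp only [Fintype.card_fin, Module.finrank_fin_fun] at this
    omega
  obtain ⟨c, hc, i, hi⟩ := Fintype.not_linearIndependent_iff.mp hdep
  exact ⟨c, fun h => hi (congrFun h i), fun l => by simpa using congrFun hc l⟩

/-- `φ` agrees on `U` with `L f` for a differential operator `L` of order `< m` whose
coefficients are analytic on `U`. -/
def DerivSpan (U : Set ℂ) (m : ℕ) (f φ : ℂ → ℂ) : Prop :=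
  ∃ c : ℕ → ℂ → ℂ, (∀ l, AnalyticOnNhd ℂ (c l) U) ∧
    EqOn φ (fun z => ∑ l ∈ range m, c l z * iteratedDeriv l f z) U

namespace DerivSpan

variable {U V : Set ℂ} {m : ℕ} {f φ ψ : ℂ → ℂ}

theorem congr (hφ : DerivSpan U m f φ) (h : EqOn φ ψ U) : DerivSpan U m f ψ :=
  let ⟨c, hc, hφc⟩ := hφ
  ⟨c, hc, h.symm.trans hφc⟩

theorem mono (hφ : DerivSpan U m f φ) (hVU : V ⊆ U) : DerivSpan V m f φ :=
  let ⟨c, hc, hφc⟩ := hφ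
  ⟨c, fun l => (hc l).mono hVU, hφc.mono hVU⟩

theorem zero : DerivSpan U m f fun _ => 0 :=
  ⟨0, fun _ => analyticOnNhd_const, fun z _ => by simp⟩

theorem add (hφ : DerivSpan U m f φ) (hψ : DerivSpan U m f ψ) :
    DerivSpan U m f fun z => φ z + ψ z := by
  obtain ⟨c, hc, hφc⟩ := hφ
  obtain ⟨d, hd, hψd⟩ := hψ
  refine ⟨c + d, fun l => (hc l).add (hd l), fun z hz => ?_⟩
  simp [hφc hz, hψd hz, add_mul, Finset.sum_add_distrib]

theorem mul {a : ℂ → ℂ} (ha : AnalyticOnNhd ℂ a U) (hφ : DerivSpan U m f φ) :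
    DerivSpan U m f fun z => a z * φ z := by
  obtain ⟨c, hc, hφc⟩ := hφ
  refine ⟨fun l => a * c l, fun l => ha.mul (hc l), fun z hz => ?_⟩
  simp [hφc hz, Finset.mul_sum, mul_assoc]

theorem sum {ι : Type*} (s : Finset ι) {φ : ι → ℂ → ℂ} (hφ : ∀ i ∈ s, DerivSpan U m f (φ i)) :
    DerivSpan U m f fun z => ∑ i ∈ s, φ i z := by
  simpa only [← Finset.sum_apply] using
    Finset.sum_induction _ (DerivSpan U m f) (fun _ _ => add) zero hφ

theorem iteratedDeriv_mem {l : ℕ} (hl : l < m) : DerivSpan U m f (iteratedDeriv l f) :=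
  ⟨fun l' _ => if l' = l then 1 else 0, fun _ => analyticOnNhd_const, fun z _ => by
    simp [Finset.mem_range.mpr hl]⟩

theorem of_forall_iteratedDeriv {m' : ℕ} (hgen : ∀ l < m, DerivSpan U m' f (iteratedDeriv l f))
    (hφ : DerivSpan U m f φ) : DerivSpan U m' f φ := by
  obtain ⟨c, hc, hφc⟩ := hφ
  refine (sum (range m) fun l hl => mul (hc l) (hgen l (Finset.mem_range.mp hl))).congr ?_
  intro z hz
  simp [hφc hz]

theorem mono_order {m' : ℕ} (hmm' : m ≤ m') (hφ : DerivSpan U m f φ) : DerivSpan U m' f φ :=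
  hφ.of_forall_iteratedDeriv fun _ hl => iteratedDeriv_mem (hl.trans_le hmm')

theorem analyticOnNhd (hU : IsOpen U) (hf : AnalyticOnNhd ℂ f U) (hφ : DerivSpan U m f φ) :
    AnalyticOnNhd ℂ φ U := by
  obtain ⟨c, hc, hφc⟩ := hφ
  refine AnalyticOnNhd.congr hU ?_ hφc.symm
  exact Finset.analyticOnNhd_fun_sum _ fun l _ => (hc l).mul (hf.iteratedDeriv l)

theorem deriv (hU : IsOpen U) (hf : AnalyticOnNhd ℂ f U) (hφ : DerivSpan U m f φ) :
    DerivSpan U (m + 1) f (deriv φ) := by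
  obtain ⟨c, hc, hφc⟩ := hφ
  have hderiv : EqOn (_root_.deriv φ) (fun z => ∑ l ∈ range m,
      (_root_.deriv (c l) z * iteratedDeriv l f z + c l z * iteratedDeriv (l + 1) f z)) U := by
    intro z hz
    rw [(hφc.eventuallyEq_of_mem (hU.mem_nhds hz)).deriv_eq]
    refine (HasDerivAt.fun_sum fun l _ => ?_).deriv
    rw [iteratedDeriv_succ]
    exact ((hc l z hz).differentiableAt.hasDerivAt).mul
      ((hf.iteratedDeriv l z hz).differentiableAt.hasDerivAt)
  refine (sum (range m) fun l hl => ?_).congr hderiv.symm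
  have hl : l < m := Finset.mem_range.mp hl
  exact add (mul ((hc l).deriv) (iteratedDeriv_mem (by omega)))
    (mul (hc l) (iteratedDeriv_mem (by omega)))

theorem apply_eq_zero {z₀ : ℂ} (hφ : DerivSpan U m f φ) (hz₀ : z₀ ∈ U)
    (hjet : ∀ l < m, iteratedDeriv l f z₀ = 0) : φ z₀ = 0 := by
  obtain ⟨c, -, hφc⟩ := hφ
  rw [hφc hz₀]
  exact Finset.sum_eq_zero fun l hl => by rw [hjet l (Finset.mem_range.mp hl), mul_zero]

theorem iteratedDeriv_mem_of_ode (hU : IsOpen U) (hf : AnalyticOnNhd ℂ f U)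
    (hode : DerivSpan U m f (iteratedDeriv m f)) (s : ℕ) :
    DerivSpan U m f (iteratedDeriv s f) := by
  have hgen : ∀ l ≤ m, DerivSpan U m f (iteratedDeriv l f) := fun l hl =>
    hl.lt_or_eq.elim iteratedDeriv_mem fun h => h ▸ hode
  induction s with
  | zero => exact hgen 0 (Nat.zero_le m)
  | succ s ih =>
    rw [iteratedDeriv_succ]
    exact (ih.deriv hU hf).of_forall_iteratedDeriv fun l hl => hgen l (Nat.lt_succ_iff.mp hl)

end DerivSpan

theorem eqOn_zero_of_derivSpan_iteratedDeriv {U V : Set ℂ} {f : ℂ → ℂ} {m : ℕ} {z₀ : ℂ}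
    (hU : IsOpen U) (hUc : IsPreconnected U) (hf : AnalyticOnNhd ℂ f U) (hV : IsOpen V)
    (hVU : V ⊆ U) (hz₀ : z₀ ∈ V) (hode : DerivSpan V m f (iteratedDeriv m f))
    (hjet : ∀ l < m, iteratedDeriv l f z₀ = 0) : EqOn f 0 U :=
  eqOn_zero_of_iteratedDeriv_eq_zero hf hU hUc (hVU hz₀) fun s =>
    (hode.iteratedDeriv_mem_of_ode hV (hf.mono hVU) s).apply_eq_zero hz₀ hjet

open UpperHalfPlane (upperHalfPlaneSet isOpen_upperHalfPlaneSet)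

local notation "ℍₒ" => upperHalfPlaneSet

theorem dedekindEta_eq_eta : DedekindEta = ModularForm.eta := by
  ext z
  simp only [DedekindEta, ModularForm.eta, ModularForm.eta_q_eq_cexp, Function.Periodic.qParam]
  congr 2
  push_cast
  ring

theorem analyticOnNhd_pfun : AnalyticOnNhd ℂ Pfun ℍₒ := by
  have hη : AnalyticOnNhd ℂ DedekindEta ℍₒ := by
    rw [dedekindEta_eq_eta]
    exact DifferentiableOn.analyticOnNhd (fun z hz =>
      (ModularForm.differentiableAt_eta_of_mem_upperHalfPlaneSet hz).differentiableWithinAt)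
      isOpen_upperHalfPlaneSet
  intro z hz
  have hne : DedekindEta z ≠ 0 := dedekindEta_eq_eta ▸ ModularForm.eta_ne_zero hz
  exact analyticAt_const.mul ((hη.deriv z hz).div (hη z hz) hne)

theorem IsHolomorphicOnH.analyticOnNhd {f : ℂ → ℂ} (hf : IsHolomorphicOnH f) :
    AnalyticOnNhd ℂ f ℍₒ :=
  DifferentiableOn.analyticOnNhd (fun z hz => (hf z hz).differentiableWithinAt)
    isOpen_upperHalfPlaneSet

theorem dkIter_sub_mem_derivSpan (k : ℝ) {f : ℂ → ℂ} (hf : AnalyticOnNhd ℂ f ℍₒ) (j : ℕ) :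
    DerivSpan ℍₒ j f fun z =>
      DkIter k j f z - (1 / (2 * Real.pi * I)) ^ j * iteratedDeriv j f z := by
  induction j with
  | zero => exact DerivSpan.zero.congr fun z _ => by simp [DkIter]
  | succ j ih =>
    set κ₀ : ℂ := 1 / (2 * Real.pi * I)
    set ψ := fun z => DkIter k j f z - κ₀ ^ j * iteratedDeriv j f z
    have hψ : AnalyticOnNhd ℂ ψ ℍₒ := ih.analyticOnNhd isOpen_upperHalfPlaneSet hf
    have hfj : AnalyticOnNhd ℂ (iteratedDeriv j f) ℍₒ := hf.iteratedDeriv j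
    have hderiv : ∀ z ∈ ℍₒ,
        deriv (DkIter k j f) z = deriv ψ z + κ₀ ^ j * iteratedDeriv (j + 1) f z := by
      intro z hz
      have hsplit : DkIter k j f = fun z => ψ z + κ₀ ^ j * iteratedDeriv j f z := by
        funext w
        simp only [ψ]
        ring
      rw [hsplit, deriv_fun_add (hψ z hz).differentiableAt
        ((hfj z hz).differentiableAt.const_mul _), deriv_const_mul _ (hfj z hz).differentiableAt,
        iteratedDeriv_succ]
    have hP : AnalyticOnNhd ℂ (fun z => ((k + 2 * j : ℝ) : ℂ) * Pfun z) ℍₒ :=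
      analyticOnNhd_const.mul analyticOnNhd_pfun
    have hmem := ((ih.deriv isOpen_upperHalfPlaneSet hf).mul (analyticOnNhd_const (v := κ₀))).add
      (((ih.mono_order j.le_succ).add ((DerivSpan.iteratedDeriv_mem j.lt_succ_self).mul
        (analyticOnNhd_const (v := κ₀ ^ j)))).mul hP)
    refine hmem.congr fun z hz => ?_
    simp only [DkIter, Dk, hderiv z hz, ψ]
    ring

theorem analyticOnNhd_dkIter (k : ℝ) {f : ℂ → ℂ} (hf : AnalyticOnNhd ℂ f ℍₒ) (j : ℕ) :
    AnalyticOnNhd ℂ (DkIter k j f) ℍₒ := by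
  refine AnalyticOnNhd.congr isOpen_upperHalfPlaneSet
    (((dkIter_sub_mem_derivSpan k hf j).analyticOnNhd isOpen_upperHalfPlaneSet hf).add
      ((analyticOnNhd_const (v := (1 / (2 * Real.pi * I) : ℂ) ^ j)).mul
        (hf.iteratedDeriv j))) fun z _ => ?_
  simp

theorem dkIter_mem_derivSpan (k : ℝ) {f : ℂ → ℂ} (hf : AnalyticOnNhd ℂ f ℍₒ) {j m : ℕ}
    (hjm : j < m) : DerivSpan ℍₒ m f (DkIter k j f) := by
  refine (((dkIter_sub_mem_derivSpan k hf j).mono_order hjm.le).add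
    ((DerivSpan.iteratedDeriv_mem hjm).mul (a := fun _ => (1 / (2 * Real.pi * I)) ^ j)
      analyticOnNhd_const)).congr fun z _ => ?_
  simp

theorem eqOn_dkIter_sum {ι : Type*} [Fintype ι] (k : ℝ) {f : ι → ℂ → ℂ}
    (hf : ∀ i, AnalyticOnNhd ℂ (f i) ℍₒ) (c : ι → ℂ) (j : ℕ) :
    EqOn (DkIter k j fun z => ∑ i, c i * f i z) (fun z => ∑ i, c i * DkIter k j (f i) z) ℍₒ := by
  induction j with
  | zero => exact fun z _ => rfl
  | succ j ih =>
    intro z hz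
    have hderiv : deriv (DkIter k j fun z => ∑ i, c i * f i z) z
        = ∑ i, c i * deriv (DkIter k j (f i)) z := by
      rw [(ih.eventuallyEq_of_mem (isOpen_upperHalfPlaneSet.mem_nhds hz)).deriv_eq]
      exact (HasDerivAt.fun_sum fun i _ =>
        ((analyticOnNhd_dkIter k (hf i) j z hz).differentiableAt.hasDerivAt).const_mul (c i)).deriv
    simp only [DkIter, Dk, hderiv, ih hz, Finset.mul_sum, ← Finset.sum_add_distrib]
    exact Finset.sum_congr rfl fun i _ => by ring

theorem derivSpan_iteratedDeriv_of_dkIter_relation {n : ℕ} (k : ℝ) {g : Fin n → ℂ → ℂ}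
    (hg : ∀ j, AnalyticOnNhd ℂ (g j) ℍₒ) {f : ℂ → ℂ} (hf : AnalyticOnNhd ℂ f ℍₒ) (m : Fin n)
    (htop : ∀ j, m < j → EqOn (g j) 0 ℍₒ)
    (hrel : ∀ z ∈ ℍₒ, ∑ j, g j z * DkIter k j f z = 0) :
    DerivSpan (ℍₒ ∩ g m ⁻¹' {0}ᶜ) m f (iteratedDeriv m f) := by
  set κ₀ : ℂ := 1 / (2 * Real.pi * I)
  have hκ₀ : κ₀ ≠ 0 := by simp [κ₀, Real.pi_ne_zero, I_ne_zero]
  -- Only the `j = m` term reaches order `m`, with leading coefficient `g m * κ₀ ^ m`.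
  have hlower : DerivSpan ℍₒ m f fun z =>
      g m z * (DkIter k m f z - κ₀ ^ (m : ℕ) * iteratedDeriv m f z)
        + ∑ j ∈ {m}ᶜ, g j z * DkIter k j f z := by
    refine ((dkIter_sub_mem_derivSpan k hf m).mul (hg m)).add (DerivSpan.sum _ fun j hj => ?_)
    rcases lt_or_gt_of_ne (Finset.mem_compl.mp hj ∘ Finset.mem_singleton.mpr) with hjm | hjm
    · exact (dkIter_mem_derivSpan k hf hjm).mul (hg j)
    · exact DerivSpan.zero.congr fun z hz => by simp [htop j hjm hz]
  have hanalytic : AnalyticOnNhd ℂ (fun z => -(g m z * κ₀ ^ (m : ℕ))⁻¹) (ℍₒ ∩ g m ⁻¹' {0}ᶜ) :=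
    (((hg m).mono inter_subset_left).mul analyticOnNhd_const).inv
      (fun z hz => mul_ne_zero hz.2 (pow_ne_zero _ hκ₀)) |>.neg
  refine ((hlower.mono inter_subset_left).mul hanalytic).congr fun z hz => ?_
  have hsum := hrel z hz.1
  rw [Fintype.sum_eq_add_sum_compl m] at hsum
  have hlead : g m z * (DkIter k m f z - κ₀ ^ (m : ℕ) * iteratedDeriv m f z)
      + ∑ j ∈ {m}ᶜ, g j z * DkIter k j f z = -(g m z * κ₀ ^ (m : ℕ)) * iteratedDeriv m f z := by
    linear_combination hsum
  have hgz : g m z ≠ 0 := hz.2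
  simp only [hlead]
  field_simp

theorem dkIter_independent_over_M_general {n : ℕ} (k : ℝ)
    (ρ : SL(2,ℤ) →* GL (Fin n) ℂ) (υ : SL(2,ℤ) → ℂ)
    (F : ℂ → Fin n → ℂ) (hF : IsVVModularForm k ρ υ F)
    (hind : ∀ c : Fin n → ℂ, (∀ z : ℂ, 0 < z.im → ∑ i, c i * F z i = 0) → c = 0)
    (w : Fin n → ℤ) (g : Fin n → ℂ → ℂ)
    (hg : ∀ j, IsModularFormMS ((w j : ℝ)) (fun _ => 1) (g j))
    (hrel : ∀ z : ℂ, 0 < z.im → ∀ i : Fin n,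
      ∑ j, g j z * DkIter k (j : ℕ) (fun w' => F w' i) z = 0) :
    ∀ j, ∀ z : ℂ, 0 < z.im → g j z = 0 := by
  have hFa i : AnalyticOnNhd ℂ (fun z => F z i) ℍₒ := (hF.1 i).analyticOnNhd
  have hga j : AnalyticOnNhd ℂ (g j) ℍₒ := (hg j).1.analyticOnNhd
  by_contra! hne
  obtain ⟨j₀, z, hz, hgz⟩ := hne
  obtain ⟨m, ⟨z₀, hz₀, hgm⟩, hmax⟩ :=
    (Set.toFinite {j | ∃ z ∈ ℍₒ, g j z ≠ 0}).exists_maximal ⟨j₀, z, hz, hgz⟩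
  have htop : ∀ j, m < j → EqOn (g j) 0 ℍₒ := fun j hjm z hz =>
    by_contra fun hgz => (hmax ⟨z, hz, hgz⟩ hjm.le).not_gt hjm
  obtain ⟨c, hc, hjet⟩ := exists_ne_zero_sum_mul_eq_zero m.isLt
    fun i (l : Fin m) => iteratedDeriv l (fun z => F z i) z₀
  set h := fun z => ∑ i, c i * F z i
  have hh : AnalyticOnNhd ℂ h ℍₒ := Finset.analyticOnNhd_fun_sum _ fun i _ =>
    analyticOnNhd_const.mul (hFa i)
  have hrel_h : ∀ z ∈ ℍₒ, ∑ j : Fin n, g j z * DkIter k j h z = 0 := fun z hz => by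
    simp only [h, eqOn_dkIter_sum k hFa c _ hz, Finset.mul_sum]
    rw [Finset.sum_comm]
    exact Finset.sum_eq_zero fun i _ => by
      simp only [mul_left_comm (g _ z), ← Finset.mul_sum, hrel z hz i, mul_zero]
  have hjet_h : ∀ l < (m : ℕ), iteratedDeriv l h z₀ = 0 := fun l hl => by
    rw [iteratedDeriv_sum_const_mul c fun i => (hFa i z₀ hz₀).contDiffAt]
    exact hjet ⟨l, hl⟩
  have hzero : EqOn h 0 ℍₒ := eqOn_zero_of_derivSpan_iteratedDeriv
    isOpen_upperHalfPlaneSet (convex_halfSpace_im_gt 0).isPreconnected hh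
    ((hga m).continuousOn.isOpen_inter_preimage isOpen_upperHalfPlaneSet
      isOpen_compl_singleton) inter_subset_left ⟨hz₀, hgm⟩
    (derivSpan_iteratedDeriv_of_dkIter_relation k hga hh m htop hrel_h) hjet_h
  exact hc (hind c fun z hz => hzero hz)

/-- If `F` is a vector-valued modular form of weight `k` for `ρ` and `υ` with
components linearly independent over `ℂ`, then `F, D_k F, …, D_k^{n-1} F` are
linearly independent over the ring `M` of classical integral-weight modular forms:
any relation `∑ g_j · D_k^j F = 0` with `g_j ∈ M` has all `g_j = 0`. -/
theorem dkIter_independent_over_M {n : ℕ} (k : ℝ)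
    (ρ : SL(2,ℤ) →* GL (Fin n) ℂ) (υ : SL(2,ℤ) → ℂ)
    (hυ : IsMultiplierSystem k υ)
    (F : ℂ → Fin n → ℂ) (hF : IsVVModularForm k ρ υ F)
    (hind : ∀ c : Fin n → ℂ, (∀ z : ℂ, 0 < z.im → ∑ i, c i * F z i = 0) → c = 0)
    (w : Fin n → ℤ) (g : Fin n → ℂ → ℂ)
    (hg : ∀ j, IsModularFormMS ((w j : ℝ)) (fun _ => 1) (g j))
    (hrel : ∀ z : ℂ, 0 < z.im → ∀ i : Fin n,
      ∑ j, g j z * DkIter k (j : ℕ) (fun w' => F w' i) z = 0) :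
    ∀ j, ∀ z : ℂ, 0 < z.im → g j z = 0 :=
  dkIter_independent_over_M_general k ρ υ F hF hind w g hg hrel
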